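/- arXiv:1511.03315 — 3 statements merged into one kernel-verified Lean document; each statement's English description precedes it below -/
import Mathlib

section
/- Let b ≥ 1, a > 0, 0 < δ < 1, and 0 ≤ t < a(1-δ)^b/(2^b - 1). Define δ(τ) = (1+δ)/2 + (1/2)^{2+1/b} [ ((1-δ)^b - τ/a)^{1/b} - ((1-δ)^b + (2^{b+1}-1)τ/a)^{1/b} ] for τ ∈ [0, t]. Then δ < δ(τ) < 1 for all τ ∈ [0, t]. -/
/-- Interpolated Gevrey radius (Lemma 4.1): for `b ≥ 1`, `a > 0`, `0 < δ < 1`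
and `0 ≤ t < a(1-δ)^b/(2^b-1)`, the function
`δ(τ) = (1+δ)/2 + (1/2)^{2+1/b} [((1-δ)^b - τ/a)^{1/b} - ((1-δ)^b + (2^{b+1}-1)τ/a)^{1/b}]`
satisfies `δ < δ(τ) < 1` for all `τ ∈ [0, t]`. -/
theorem stmt_11 (b a δ t : ℝ) (hb : 1 ≤ b) (ha : 0 < a) (hδ0 : 0 < δ) (hδ1 : δ < 1)
    (ht0 : 0 ≤ t) (ht : t < a * (1 - δ) ^ b / ((2 : ℝ) ^ b - 1)) :
    ∀ τ : ℝ, 0 ≤ τ → τ ≤ t →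
      δ < (1 + δ) / 2 + (1 / 2 : ℝ) ^ (2 + 1 / b) *
          (((1 - δ) ^ b - τ / a) ^ (1 / b) -
            ((1 - δ) ^ b + ((2 : ℝ) ^ (b + 1) - 1) * τ / a) ^ (1 / b)) ∧
      (1 + δ) / 2 + (1 / 2 : ℝ) ^ (2 + 1 / b) *
          (((1 - δ) ^ b - τ / a) ^ (1 / b) -
            ((1 - δ) ^ b + ((2 : ℝ) ^ (b + 1) - 1) * τ / a) ^ (1 / b)) < 1 := by
  intro τ hτ0 hτt
  have hb0 : (0:ℝ) < b := lt_of_lt_of_le one_pos hb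
  have hb0' : b ≠ 0 := ne_of_gt hb0
  have h1δ : (0:ℝ) < 1 - δ := by linarith
  set D : ℝ := (1 - δ) ^ b with hDdef
  have hD0 : 0 < D := Real.rpow_pos_of_pos h1δ b
  have h2b : (2:ℝ) ≤ (2:ℝ) ^ b := by
    calc (2:ℝ) = (2:ℝ) ^ (1:ℝ) := (Real.rpow_one 2).symm
    _ ≤ (2:ℝ) ^ b := Real.rpow_le_rpow_of_exponent_le (by norm_num) hb
  have h2b1 : (1:ℝ) ≤ (2:ℝ) ^ b - 1 := by linarith
  have htaD : t * ((2:ℝ) ^ b - 1) < a * D := (lt_div_iff₀ (by linarith)).mp ht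
  have hτa0 : 0 ≤ τ / a := div_nonneg hτ0 ha.le
  -- (2^b - 1) * (τ/a) < D
  have hkey : ((2:ℝ) ^ b - 1) * (τ / a) < D := by
    have h1 : ((2:ℝ) ^ b - 1) * τ ≤ ((2:ℝ) ^ b - 1) * t :=
      mul_le_mul_of_nonneg_left hτt (by linarith)
    calc ((2:ℝ) ^ b - 1) * (τ / a) = (((2:ℝ) ^ b - 1) * τ) / a := by ring
    _ < D := by rw [div_lt_iff₀ ha]; nlinarith
  have hτaD : τ / a < D := by nlinarith
  -- 2^(b+1) = 2 * 2^b
  have h2b1' : (2:ℝ) ^ (b + 1) = 2 ^ b * 2 := by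
    rw [Real.rpow_add (by norm_num), Real.rpow_one]
  set A : ℝ := D - τ / a with hA
  set B : ℝ := D + ((2:ℝ) ^ (b + 1) - 1) * τ / a with hB
  have hA0 : 0 < A := by simp only [hA]; linarith
  have hAB : A ≤ B := by
    simp only [hA, hB, mul_div_assoc]
    nlinarith [mul_nonneg (by nlinarith : (0:ℝ) ≤ (2:ℝ) ^ (b+1) - 1) hτa0]
  have hB4 : B < 4 * D := by
    simp only [hB, h2b1', mul_div_assoc]
    nlinarith
  have hc : (0:ℝ) < (1 / 2 : ℝ) ^ (2 + 1 / b) := Real.rpow_pos_of_pos (by norm_num) _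
  have hABr : A ^ (1/b) ≤ B ^ (1/b) :=
    Real.rpow_le_rpow hA0.le hAB (by positivity)
  have hAr0 : 0 ≤ A ^ (1/b) := Real.rpow_nonneg hA0.le _
  -- key upper bound on B^(1/b)
  have hBr : B ^ (1/b) < (4 * D) ^ (1/b) :=
    Real.rpow_lt_rpow (by linarith) hB4 (by positivity)
  -- compute (1/2)^(2+1/b) * (4*D)^(1/b) = 2^(1/b - 2) * (1 - δ)
  have hDr : D ^ (1/b) = 1 - δ := by
    rw [hDdef, ← Real.rpow_mul h1δ.le, mul_one_div, div_self hb0', Real.rpow_one]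
  have h4r : (4:ℝ) ^ (1/b) = (2:ℝ) ^ (2/b) := by
    have : (4:ℝ) = (2:ℝ) ^ (2:ℝ) := by
      rw [show ((2:ℝ):ℝ) = ((2:ℕ):ℝ) by norm_num, Real.rpow_natCast]; norm_num
    rw [this, ← Real.rpow_mul (by norm_num)]
    ring_nf
  have hhalf : ((1:ℝ)/2) ^ (2 + 1/b) = (2:ℝ) ^ (-(2 + 1/b)) := by
    rw [one_div, Real.inv_rpow (by norm_num), ← Real.rpow_neg (by norm_num)]
  have hprod : (1 / 2 : ℝ) ^ (2 + 1 / b) * (4 * D) ^ (1/b) = (2:ℝ) ^ (1/b - 2) * (1 - δ) := by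
    rw [Real.mul_rpow (by norm_num) hD0.le, hDr, h4r, hhalf, ← mul_assoc,
      ← Real.rpow_add (by norm_num)]
    ring_nf
  have hexp : (2:ℝ) ^ (1/b - 2) ≤ 1/2 := by
    have h1b : 1/b ≤ 1 := by
      rw [div_le_one hb0]; exact hb
    calc (2:ℝ) ^ (1/b - 2) ≤ (2:ℝ) ^ (-1:ℝ) :=
          Real.rpow_le_rpow_of_exponent_le (by norm_num) (by linarith)
    _ = 1/2 := by
        rw [Real.rpow_neg_one]; norm_num
  -- final bound: c * B^(1/b) < (1-δ)/2
  have hfin : (1 / 2 : ℝ) ^ (2 + 1 / b) * B ^ (1/b) < (1 - δ) / 2 := by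
    calc (1 / 2 : ℝ) ^ (2 + 1 / b) * B ^ (1/b)
        < (1 / 2 : ℝ) ^ (2 + 1 / b) * (4 * D) ^ (1/b) := by
          exact mul_lt_mul_of_pos_left hBr hc
    _ = (2:ℝ) ^ (1/b - 2) * (1 - δ) := hprod
    _ ≤ (1/2) * (1 - δ) := mul_le_mul_of_nonneg_right hexp h1δ.le
    _ = (1 - δ) / 2 := by ring
  have hsplit : (1 / 2 : ℝ) ^ (2 + 1 / b) * (A ^ (1/b) - B ^ (1/b))
      = (1 / 2 : ℝ) ^ (2 + 1 / b) * A ^ (1/b) - (1 / 2 : ℝ) ^ (2 + 1 / b) * B ^ (1/b) := by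
    ring
  have hcA : 0 ≤ (1 / 2 : ℝ) ^ (2 + 1 / b) * A ^ (1/b) := mul_nonneg hc.le hAr0
  have hcAB : (1 / 2 : ℝ) ^ (2 + 1 / b) * A ^ (1/b) ≤ (1 / 2 : ℝ) ^ (2 + 1 / b) * B ^ (1/b) :=
    mul_le_mul_of_nonneg_left hABr hc.le
  constructor
  · linarith [hsplit, hcA, hfin]
  · linarith [hsplit, hcAB]
end

section
/- Under the hypotheses of the previous statement with the sign-flipped PDE n_t = (nH)_x - nH - A·n along the flow (with A = H + ½(u-u_x)(v+v_x) replaced appropriately), one has n(t, q(t,x)) q_x(t,x) = n_0(x) · exp( -∫_0^t A(s, q(s,x)) ds ). Consequently, if m_0 and n_0 are both nonnegative (resp. nonpositive, resp. of a fixed sign), then m(t,·) and n(t,·) retain that sign for all t ∈ [0,T), since q_x > 0 and the exponential factor is positive. -/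
/-! Along a characteristic `γ' = -H(s, γ)`, the equation `w_t - (wH)_x = B w` becomes, by the
chain and product rules, the linear ODE `φ' = B(s, γ) φ` for
`φ(s) = w(s, γ s) · exp (-∫₀ˢ Hₓ(r, γ r) dr)`, whence `φ(t) = φ(0) · exp (∫₀ᵗ B(s, γ s) ds)`.
This gives the identity for `n` (with `B = -A`) and the analogous one for `m` (with `B = A`);
since `q t` is onto and the exponential factors are positive, the signs of `m₀` and `n₀`
persist. -/

open MeasureTheory Set Filter Topology Function

section PartialDerivatives

variable {E : Type*} [NormedAddCommGroup E] [NormedSpace ℝ E] {F : ℝ → ℝ → E}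
  {L : ℝ × ℝ →L[ℝ] E}

lemma HasFDerivAt.hasDerivAt_uncurry_left {t y : ℝ} (hF : HasFDerivAt (uncurry F) L (t, y)) :
    HasDerivAt (F · y) (L (1, 0)) t :=
  (hF.comp_hasDerivAt t ((hasDerivAt_id t).prodMk (hasDerivAt_const t y)) :)

lemma HasFDerivAt.hasDerivAt_uncurry_right {t y : ℝ} (hF : HasFDerivAt (uncurry F) L (t, y)) :
    HasDerivAt (F t ·) (L (0, 1)) y :=
  (hF.comp_hasDerivAt y ((hasDerivAt_const y t).prodMk (hasDerivAt_id y)) :)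

lemma HasFDerivAt.hasDerivAt_uncurry_comp {γ : ℝ → ℝ} {s γ' : ℝ}
    (hF : HasFDerivAt (uncurry F) L (s, γ s)) (hγ : HasDerivAt γ γ' s) :
    HasDerivAt (fun s => F s (γ s)) (L (1, 0) + γ' • L (0, 1)) s := by
  have hL : L (1, γ') = L (1, 0) + γ' • L (0, 1) := by
    rw [← L.map_smul, ← L.map_add]
    simp
  exact hL ▸ (hF.comp_hasDerivAt s ((hasDerivAt_id s).prodMk hγ) :)

lemma ContDiff.continuous_uncurry_of_hasDerivAt_right {Fx : ℝ → ℝ → E}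
    (hF : ContDiff ℝ 1 (uncurry F)) (hFx : ∀ t y, HasDerivAt (F t ·) (Fx t y) y) :
    Continuous (uncurry Fx) := by
  have hFx_eq : uncurry Fx = fun p => fderiv ℝ (uncurry F) p (0, 1) := by
    ext ⟨t, y⟩
    exact (hFx t y).unique
      ((hF.differentiable one_ne_zero (t, y)).hasFDerivAt.hasDerivAt_uncurry_right)
  rw [hFx_eq]
  exact (hF.continuous_fderiv one_ne_zero).clm_apply continuous_const

end PartialDerivatives

lemma ContinuousOn.integral_hasDerivWithinAt_Ici {E : Type*} [NormedAddCommGroup E]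
    [NormedSpace ℝ E] [CompleteSpace E] {f : ℝ → E} {a b s : ℝ} (hf : ContinuousOn f (Icc a b))
    (hs : s ∈ Ico a b) : HasDerivWithinAt (fun u => ∫ r in a..u, f r) (f s) (Ici s) s := by
  have hsb : Icc s b ∈ 𝓝[>] s := Icc_mem_nhdsGT hs.2
  have hsub : Icc s b ⊆ Icc a b := Icc_subset_Icc_left hs.1
  exact intervalIntegral.integral_hasDerivWithinAt_right
    ((hf.mono (Icc_subset_Icc_right hs.2.le)).intervalIntegrable_of_Icc hs.1)
    ⟨Icc s b, hsb, (hf.mono hsub).aestronglyMeasurable measurableSet_Icc⟩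
    ((hf s ⟨hs.1, hs.2.le⟩).mono_of_mem_nhdsWithin (mem_of_superset hsb hsub))

lemma ContinuousOn.continuousOn_primitive_Icc {E : Type*} [NormedAddCommGroup E]
    [NormedSpace ℝ E] {f : ℝ → E} {a b : ℝ} (hab : a ≤ b) (hf : ContinuousOn f (Icc a b)) :
    ContinuousOn (fun u => ∫ r in a..u, f r) (Icc a b) := by
  simpa only [uIcc_of_le hab] using intervalIntegral.continuousOn_primitive_interval
    (uIcc_of_le hab ▸ hf.integrableOn_Icc : IntegrableOn f (uIcc a b))

lemma eq_mul_exp_integral_of_hasDerivWithinAt {φ c : ℝ → ℝ} {a b : ℝ} (hab : a ≤ b)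
    (hc : ContinuousOn c (Icc a b)) (hφ : ContinuousOn φ (Icc a b))
    (hφ' : ∀ s ∈ Ico a b, HasDerivWithinAt φ (c s * φ s) (Ici s) s) :
    φ b = φ a * Real.exp (∫ s in a..b, c s) := by
  set I := fun u => ∫ s in a..u, c s
  have hψ_cont : ContinuousOn (fun u => φ u * Real.exp (-I u)) (Icc a b) :=
    hφ.mul (hc.continuousOn_primitive_Icc hab).neg.rexp
  have hψ' : ∀ s ∈ Ico a b, HasDerivWithinAt (fun u => φ u * Real.exp (-I u)) 0 (Ici s) s := by
    intro s hs
    have hE : HasDerivWithinAt (fun u => Real.exp (-I u)) (Real.exp (-I s) * -c s) (Ici s) s :=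
      (hc.integral_hasDerivWithinAt_Ici hs).neg.exp
    exact ((hφ' s hs).fun_mul hE).congr_deriv (by ring)
  have hψ := constant_of_has_deriv_right_zero hψ_cont hψ' b ⟨hab, le_rfl⟩
  simp only [I, intervalIntegral.integral_same, neg_zero, Real.exp_zero, mul_one] at hψ
  rw [← hψ, mul_assoc, ← Real.exp_add, neg_add_cancel, Real.exp_zero, mul_one]

lemma transport_along_characteristic {w H Hx B wt wHx : ℝ → ℝ → ℝ} {γ : ℝ → ℝ} {a b : ℝ}
    (hab : a ≤ b) (hw : Differentiable ℝ (uncurry w)) (hHx_cont : Continuous (uncurry Hx))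
    (hB : Continuous (uncurry B)) (hHx : ∀ t y, HasDerivAt (H t ·) (Hx t y) y)
    (hwt : ∀ t y, HasDerivAt (w · y) (wt t y) t)
    (hwHx : ∀ t y, HasDerivAt (fun y' => w t y' * H t y') (wHx t y) y)
    (hPDE : ∀ t y, wt t y - wHx t y = B t y * w t y)
    (hγ : ∀ s ∈ Icc a b, HasDerivAt γ (-H s (γ s)) s) :
    w b (γ b) * Real.exp (-∫ s in a..b, Hx s (γ s)) =
      w a (γ a) * Real.exp (∫ s in a..b, B s (γ s)) := by
  have hcurve : ContinuousOn (fun s => (s, γ s)) (Icc a b) :=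
    continuousOn_id.prodMk fun s hs => (hγ s hs).continuousAt.continuousWithinAt
  have hg : ContinuousOn (fun s => Hx s (γ s)) (Icc a b) := hHx_cont.comp_continuousOn hcurve
  set J := fun u => ∫ s in a..u, Hx s (γ s)
  have hφ' : ∀ s ∈ Ico a b, HasDerivWithinAt (fun s => w s (γ s) * Real.exp (-J s))
      (B s (γ s) * (w s (γ s) * Real.exp (-J s))) (Ici s) s := by
    intro s hs
    set L := fderiv ℝ (uncurry w) (s, γ s)
    have hL : HasFDerivAt (uncurry w) L (s, γ s) := (hw _).hasFDerivAt
    have hwt_eq : wt s (γ s) = L (1, 0) := (hwt s (γ s)).unique hL.hasDerivAt_uncurry_left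
    have hwHx_eq : wHx s (γ s) = L (0, 1) * H s (γ s) + w s (γ s) * Hx s (γ s) :=
      (hwHx s (γ s)).unique (hL.hasDerivAt_uncurry_right.mul (hHx s (γ s)))
    have hE : HasDerivWithinAt (fun u => Real.exp (-J u)) (Real.exp (-J s) * -Hx s (γ s))
        (Ici s) s :=
      (hg.integral_hasDerivWithinAt_Ici hs).neg.exp
    refine ((hL.hasDerivAt_uncurry_comp (hγ s (Ico_subset_Icc_self hs))).hasDerivWithinAt.fun_mul
      hE).congr_deriv ?_
    have hPDE_s := hPDE s (γ s)
    rw [hwt_eq, hwHx_eq] at hPDE_s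
    simp only [smul_eq_mul]
    linear_combination Real.exp (-J s) * hPDE_s
  have key := eq_mul_exp_integral_of_hasDerivWithinAt
    (φ := fun s => w s (γ s) * Real.exp (-J s)) (c := fun s => B s (γ s)) hab
    (hB.comp_continuousOn hcurve)
    ((hw.continuous.comp_continuousOn hcurve).mul (hg.continuousOn_primitive_Icc hab).neg.rexp) hφ'
  simpa only [J, intervalIntegral.integral_same, neg_zero, Real.exp_zero, mul_one] using key

theorem stmt_14_general (T : ℝ) (m n H A Hx mt nt mHx nHx : ℝ → ℝ → ℝ)
    (q : ℝ → ℝ → ℝ)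
    (hmC1 : ContDiff ℝ 1 fun p : ℝ × ℝ => m p.1 p.2)
    (hnC1 : ContDiff ℝ 1 fun p : ℝ × ℝ => n p.1 p.2)
    (hHC1 : ContDiff ℝ 1 fun p : ℝ × ℝ => H p.1 p.2)
    (hAC1 : ContDiff ℝ 1 fun p : ℝ × ℝ => A p.1 p.2)
    (hHx : ∀ t y : ℝ, HasDerivAt (fun y' => H t y') (Hx t y) y)
    (hmt : ∀ t y : ℝ, HasDerivAt (fun t' => m t' y) (mt t y) t)
    (hnt : ∀ t y : ℝ, HasDerivAt (fun t' => n t' y) (nt t y) t)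
    (hmHx : ∀ t y : ℝ, HasDerivAt (fun y' => m t y' * H t y') (mHx t y) y)
    (hnHx : ∀ t y : ℝ, HasDerivAt (fun y' => n t y' * H t y') (nHx t y) y)
    (hPDEm : ∀ t y : ℝ, mt t y - mHx t y = A t y * m t y)
    (hPDEn : ∀ t y : ℝ, nt t y - nHx t y = -(A t y * n t y))
    (hq0 : ∀ x : ℝ, q 0 x = x)
    (hq : ∀ x : ℝ, ∀ t ∈ Ico (0 : ℝ) T,
      HasDerivAt (fun t' => q t' x) (-(H t (q t x))) t)
    (hqsurj : ∀ t ∈ Ico (0 : ℝ) T, Function.Surjective (q t)) :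
    (∀ t ∈ Ico (0 : ℝ) T, ∀ x : ℝ,
      n t (q t x) * Real.exp (-∫ s in (0 : ℝ)..t, Hx s (q s x)) =
        n 0 x * Real.exp (-∫ s in (0 : ℝ)..t, A s (q s x))) ∧
    ((∀ x : ℝ, 0 ≤ m 0 x) → (∀ x : ℝ, 0 ≤ n 0 x) →
      ∀ t ∈ Ico (0 : ℝ) T, ∀ y : ℝ, 0 ≤ m t y ∧ 0 ≤ n t y) := by
  have hHx_cont := hHC1.continuous_uncurry_of_hasDerivAt_right hHx
  have hchar (t : ℝ) (ht : t ∈ Ico 0 T) (x : ℝ) :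
      ∀ s ∈ Icc 0 t, HasDerivAt (q · x) (-H s (q s x)) s :=
    fun s hs => hq x s ⟨hs.1, hs.2.trans_lt ht.2⟩
  have hm (t : ℝ) (ht : t ∈ Ico 0 T) (x : ℝ) :
      m t (q t x) * Real.exp (-∫ s in (0 : ℝ)..t, Hx s (q s x)) =
        m 0 x * Real.exp (∫ s in (0 : ℝ)..t, A s (q s x)) := by
    have := transport_along_characteristic ht.1 (hmC1.differentiable one_ne_zero) hHx_cont
      hAC1.continuous hHx hmt hmHx hPDEm (hchar t ht x)
    rwa [hq0] at this
  have hn (t : ℝ) (ht : t ∈ Ico 0 T) (x : ℝ) :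
      n t (q t x) * Real.exp (-∫ s in (0 : ℝ)..t, Hx s (q s x)) =
        n 0 x * Real.exp (-∫ s in (0 : ℝ)..t, A s (q s x)) := by
    have := transport_along_characteristic (B := fun t y => -A t y) ht.1
      (hnC1.differentiable one_ne_zero) hHx_cont hAC1.continuous.neg hHx hnt hnHx
      (fun t y => by rw [hPDEn]; ring) (hchar t ht x)
    rwa [hq0, intervalIntegral.integral_neg] at this
  refine ⟨hn, fun hm0 hn0 t ht y => ?_⟩
  obtain ⟨x, rfl⟩ := hqsurj t ht y
  have hE : 0 < Real.exp (-∫ s in (0 : ℝ)..t, Hx s (q s x)) := Real.exp_pos _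
  exact ⟨nonneg_of_mul_nonneg_left (hm t ht x ▸ mul_nonneg (hm0 x) (Real.exp_pos _).le) hE,
    nonneg_of_mul_nonneg_left (hn t ht x ▸ mul_nonneg (hn0 x) (Real.exp_pos _).le) hE⟩

/-- Lemma 5.2, sign-flipped version and sign preservation: if `q` is the flow
of `-H` with `qₓ(t,x) = exp(-∫₀ᵗ Hₓ(s,q(s,x))ds)`, `m` solves
`m_t = (mH)_x + A·m` and `n` solves the sign-flipped equation
`n_t = (nH)_x - A·n`, then
`n(t, q(t,x)) qₓ(t,x) = n₀(x) exp(-∫₀ᵗ A(s, q(s,x)) ds)`; consequently, since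
`qₓ > 0` and the exponential factors are positive, if `m₀ ≥ 0` and `n₀ ≥ 0`
then `m(t,·) ≥ 0` and `n(t,·) ≥ 0` for all `t ∈ [0,T)`. -/
theorem stmt_14 (T : ℝ) (hT : 0 < T) (m n H A Hx mt nt mHx nHx : ℝ → ℝ → ℝ)
    (q : ℝ → ℝ → ℝ)
    (hmC1 : ContDiff ℝ 1 fun p : ℝ × ℝ => m p.1 p.2)
    (hnC1 : ContDiff ℝ 1 fun p : ℝ × ℝ => n p.1 p.2)
    (hHC1 : ContDiff ℝ 1 fun p : ℝ × ℝ => H p.1 p.2)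
    (hAC1 : ContDiff ℝ 1 fun p : ℝ × ℝ => A p.1 p.2)
    (hHx : ∀ t y : ℝ, HasDerivAt (fun y' => H t y') (Hx t y) y)
    (hmt : ∀ t y : ℝ, HasDerivAt (fun t' => m t' y) (mt t y) t)
    (hnt : ∀ t y : ℝ, HasDerivAt (fun t' => n t' y) (nt t y) t)
    (hmHx : ∀ t y : ℝ, HasDerivAt (fun y' => m t y' * H t y') (mHx t y) y)
    (hnHx : ∀ t y : ℝ, HasDerivAt (fun y' => n t y' * H t y') (nHx t y) y)
    (hPDEm : ∀ t y : ℝ, mt t y - mHx t y = A t y * m t y)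
    (hPDEn : ∀ t y : ℝ, nt t y - nHx t y = -(A t y * n t y))
    (hq0 : ∀ x : ℝ, q 0 x = x)
    (hq : ∀ x : ℝ, ∀ t ∈ Ico (0 : ℝ) T,
      HasDerivAt (fun t' => q t' x) (-(H t (q t x))) t)
    (hqx : ∀ x : ℝ, ∀ t ∈ Ico (0 : ℝ) T,
      HasDerivAt (fun x' => q t x')
        (Real.exp (-∫ s in (0 : ℝ)..t, Hx s (q s x))) x)
    (hqsurj : ∀ t ∈ Ico (0 : ℝ) T, Function.Surjective (q t)) :
    (∀ t ∈ Ico (0 : ℝ) T, ∀ x : ℝ,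
      n t (q t x) * Real.exp (-∫ s in (0 : ℝ)..t, Hx s (q s x)) =
        n 0 x * Real.exp (-∫ s in (0 : ℝ)..t, A s (q s x))) ∧
    ((∀ x : ℝ, 0 ≤ m 0 x) → (∀ x : ℝ, 0 ≤ n 0 x) →
      ∀ t ∈ Ico (0 : ℝ) T, ∀ y : ℝ, 0 ≤ m t y ∧ 0 ≤ n t y) :=
  stmt_14_general T m n H A Hx mt nt mHx nHx q hmC1 hnC1 hHC1 hAC1 hHx hmt hnt hmHx hnHx hPDEm hPDEn
    hq0 hq hqsurj
end

section
/- Let m : ℝ → ℝ be continuous with compact support, u = ½ e^{-|·|} * m, and suppose E_+ := ∫_ℝ e^y m(y) dy ≠ 0. Then u does not have compact support; in fact u(x) = ½ E_+ e^{-x} ≠ 0 for all x to the right of the support of m. Consequently, if a solution of the system has u(t,·) compactly supported at some time t > 0 at which E_+(t) ≠ 0, a contradiction arises: a nontrivial solution with compactly supported initial data cannot remain compactly supported (unique continuation). -/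
open MeasureTheory

/-- Unique continuation mechanism: if `m` is continuous with compact support,
`u = ½ e^{-|·|} * m`, and `E₊ = ∫ eʸ m(y) dy ≠ 0`, then to the right of the
support of `m` one has `u(x) = ½ E₊ e^{-x} ≠ 0`; in particular `u` does not
have compact support. -/
theorem stmt_19 (m u : ℝ → ℝ) (hm : Continuous m) (hmsupp : HasCompactSupport m)
    (hu : ∀ x : ℝ, u x = (1 / 2) * ∫ y : ℝ, Real.exp (-|x - y|) * m y)
    (hE : (∫ y : ℝ, Real.exp y * m y) ≠ 0) :
    (∀ x : ℝ, (∀ y ∈ tsupport m, y < x) →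
      u x = (1 / 2) * (∫ y : ℝ, Real.exp y * m y) * Real.exp (-x) ∧ u x ≠ 0) ∧
    ¬ HasCompactSupport u := by
  have key : ∀ x : ℝ, (∀ y ∈ tsupport m, y < x) →
      u x = (1 / 2) * (∫ y : ℝ, Real.exp y * m y) * Real.exp (-x) ∧ u x ≠ 0 := by
    intro x hx
    have hfun : (fun y : ℝ => Real.exp (-|x - y|) * m y)
        = fun y : ℝ => Real.exp (-x) * (Real.exp y * m y) := by
      funext y
      by_cases hy : m y = 0
      · simp [hy]
      · have hyx : y < x := hx y (subset_tsupport m hy)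
        have habs : |x - y| = x - y := abs_of_pos (by linarith)
        rw [habs]
        have : Real.exp (-(x - y)) = Real.exp (-x) * Real.exp y := by
          rw [← Real.exp_add]; ring_nf
        rw [this]; ring
    have hI : (∫ y : ℝ, Real.exp (-|x - y|) * m y)
        = Real.exp (-x) * ∫ y : ℝ, Real.exp y * m y := by
      rw [hfun, integral_const_mul]
    have hux : u x = (1 / 2) * (∫ y : ℝ, Real.exp y * m y) * Real.exp (-x) := by
      rw [hu x, hI]; ring
    refine ⟨hux, ?_⟩
    rw [hux]
    exact mul_ne_zero (mul_ne_zero (by norm_num) hE) (Real.exp_ne_zero _)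
  refine ⟨key, ?_⟩
  intro hucs
  obtain ⟨B₁, hB₁⟩ := hmsupp.isCompact.bddAbove
  obtain ⟨B₂, hB₂⟩ := hucs.isCompact.bddAbove
  set x := max B₁ B₂ + 1 with hxdef
  have hxm : ∀ y ∈ tsupport m, y < x := by
    intro y hy
    have := hB₁ hy
    have : y ≤ max B₁ B₂ := le_trans this (le_max_left _ _)
    linarith
  have hux : u x ≠ 0 := (key x hxm).2
  apply hux
  apply image_eq_zero_of_notMem_tsupport
  intro hxu
  have := hB₂ hxu
  have : x ≤ max B₁ B₂ := le_trans this (le_max_right _ _)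
  linarith
end
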